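/- arXiv:1305.3716 — 6 statements merged into one kernel-verified Lean document; each statement's English description precedes it below -/
import Mathlib

section
/- WZ-pair identity: fix integers i ≥ 1 and 0 ≤ j ≤ i, and for integers m ≥ 1 and k ≥ 0 define the rational numbers F(m,k) = (−1)^{m+k}·C(m+k, m−k)·C(k+1, j+1)·C(k, j)·Cat_k / (C(m+j, m−j)^2·Cat_j) and G(m,k) = (−1)^{m+k}·C(m+k+1, m−k+1)·C(k+1, j+1)·C(k, j)·Cat_k·2(m+1)(k−j)^2 / (C(m+j, m−j)^2·Cat_j·(m+j+1)^2·(m+k+1)), where by convention the binomial coefficient C(a, b) equals 0 whenever b < 0 (subtractions taken in ℤ, so C(m+k, m−k) = 0 for k > m). Then for every k ≥ 0, F(i+1, k) − F(i, k) = G(i, k+1) − G(i, k). -/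
/-!
On the support `j ≤ k ≤ i` each of `F(i + 1, k)`, `G(i, k + 1)` and `G(i, k)` is a rational
multiple of `F(i, k)`, by the absorption identities for binomial coefficients and the recurrence
`(n + 2) Cat_{n+1} = 2 (2n + 1) Cat_n`; dividing by `F(i, k)` leaves an identity of rational
functions of `i, j, k`. Outside the support every term vanishes, except at `k = i + 1`, where
`F(i + 1, i + 1) = -G(i, i + 1)`.
-/

/-- Binomial coefficient `C(a, b)` with an integer lower index, equal to `0` when `b < 0`. -/
def ichoose (a : ℕ) (b : ℤ) : ℚ :=
  if b < 0 then 0 else (a.choose b.toNat : ℚ)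

/-- The WZ proof certificate's `F(m, k)`, for a fixed parameter `j`. -/
noncomputable def Fwz (j m k : ℕ) : ℚ :=
  ((-1 : ℚ) ^ (m + k) * ichoose (m + k) ((m : ℤ) - k) * (Nat.choose (k + 1) (j + 1) : ℚ) *
      (Nat.choose k j : ℚ) * (catalan k : ℚ)) /
    ((ichoose (m + j) ((m : ℤ) - j)) ^ 2 * (catalan j : ℚ))

/-- The WZ proof certificate's `G(m, k)`, for a fixed parameter `j`. -/
noncomputable def Gwz (j m k : ℕ) : ℚ :=
  ((-1 : ℚ) ^ (m + k) * ichoose (m + k + 1) ((m : ℤ) - k + 1) *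
      (Nat.choose (k + 1) (j + 1) : ℚ) * (Nat.choose k j : ℚ) * (catalan k : ℚ) *
      (2 * ((m : ℚ) + 1) * ((k : ℚ) - (j : ℚ)) ^ 2)) /
    ((ichoose (m + j) ((m : ℤ) - j)) ^ 2 * (catalan j : ℚ) * ((m : ℚ) + (j : ℚ) + 1) ^ 2 *
      ((m : ℚ) + (k : ℚ) + 1))

lemma ichoose_of_neg {a : ℕ} {b : ℤ} (hb : b < 0) : ichoose a b = 0 := if_pos hb

lemma ichoose_natCast (a r : ℕ) : ichoose a r = a.choose r := by
  simp [ichoose]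

lemma ichoose_succ_succ (n : ℕ) {b : ℤ} (hb : 0 ≤ b) :
    ichoose (n + 1) (b + 1) = (n + 1) / (b + 1) * ichoose n b := by
  lift b to ℕ using hb
  rw [← Nat.cast_succ, ichoose_natCast, ichoose_natCast, Int.cast_natCast,
    div_mul_eq_mul_div, eq_div_iff (by positivity)]
  exact_mod_cast (Nat.add_one_mul_choose_eq n b).symm

lemma ichoose_succ_left (n : ℕ) {b : ℤ} (hb : b ≤ n) :
    ichoose (n + 1) b = (n + 1) / (n + 1 - b) * ichoose n b := by
  rcases lt_or_ge b 0 with hneg | hb0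
  · simp [ichoose_of_neg hneg]
  lift b to ℕ using hb0
  have hbn : b ≤ n := by exact_mod_cast hb
  have h : ((n.choose b * (n + 1) : ℕ) : ℚ) = ((n + 1).choose b * (n + 1 - b) : ℕ) :=
    congrArg _ (Nat.choose_mul_succ_eq n b)
  push_cast [Nat.cast_sub (hbn.trans n.le_succ)] at h
  rw [ichoose_natCast, ichoose_natCast, Int.cast_natCast, div_mul_eq_mul_div,
    eq_div_iff (by linarith [(Nat.cast_le (α := ℚ)).2 hbn])]
  linear_combination -h

lemma cast_choose_succ_left {n r : ℕ} (h : r ≤ n) :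
    ((n + 1).choose r : ℚ) = (n + 1) / (n + 1 - r) * n.choose r := by
  simpa [ichoose_natCast] using ichoose_succ_left n (b := r) (by exact_mod_cast h)

lemma ichoose_sub_ne_zero {m j : ℕ} (hj : j ≤ m) : ichoose (m + j) ((m : ℤ) - j) ≠ 0 := by
  rw [show (m : ℤ) - j = ((m - j : ℕ) : ℤ) by omega, ichoose_natCast]
  exact_mod_cast (Nat.choose_pos (by omega)).ne'

lemma ichoose_succ_add_sub {m j : ℕ} (hj : j ≤ m) :
    ichoose (m + 1 + j) ((m + 1 : ℕ) - j) =
      (m + j + 1) / (m - j + 1) * ichoose (m + j) ((m : ℤ) - j) := by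
  rw [add_right_comm, show ((m + 1 : ℕ) : ℤ) - j = (m - j) + 1 by push_cast; ring,
    ichoose_succ_succ _ (by omega)]
  push_cast
  ring

lemma catalan_ne_zero (n : ℕ) : catalan n ≠ 0 := by
  intro h0
  have h := succ_mul_catalan_eq_centralBinom n
  simp [h0, (Nat.centralBinom_pos n).ne] at h

lemma cast_catalan_succ (n : ℕ) :
    (catalan (n + 1) : ℚ) = 2 * (2 * n + 1) / (n + 2) * catalan n := by
  have h := Nat.succ_mul_centralBinom_succ n
  rw [← succ_mul_catalan_eq_centralBinom, ← succ_mul_catalan_eq_centralBinom] at h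
  have h' := congrArg (Nat.cast : ℕ → ℚ) h
  push_cast at h'
  rw [div_mul_eq_mul_div, eq_div_iff (by positivity)]
  apply mul_left_cancel₀ (show (n + 1 : ℚ) ≠ 0 by positivity)
  linear_combination h'

section

variable {j m k : ℕ}

lemma Fwz_eq_zero_of_lt (h : m < k) : Fwz j m k = 0 := by
  simp [Fwz, ichoose_of_neg (show (m : ℤ) - k < 0 by omega)]

lemma Fwz_eq_zero_of_lt_param (h : k < j) : Fwz j m k = 0 := by
  simp [Fwz, Nat.choose_eq_zero_of_lt h]

lemma Gwz_eq_zero_of_succ_lt (h : m + 1 < k) : Gwz j m k = 0 := by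
  simp [Gwz, ichoose_of_neg (show (m : ℤ) - k + 1 < 0 by omega)]

lemma Gwz_eq_zero_of_le_param (h : k ≤ j) : Gwz j m k = 0 := by
  obtain h | rfl := h.lt_or_eq
  · simp [Gwz, Nat.choose_eq_zero_of_lt h]
  · simp [Gwz]

lemma Fwz_succ_left_eq_mul_Fwz (hk : k ≤ m) (hj : j ≤ m) :
    Fwz j (m + 1) k =
      -((m + k + 1) * (m - j + 1) ^ 2 / ((m - k + 1) * (m + j + 1) ^ 2)) * Fwz j m k := by
  have := ichoose_sub_ne_zero hj
  have := catalan_ne_zero j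
  unfold Fwz
  rw [ichoose_succ_add_sub hk, ichoose_succ_add_sub hj, add_right_comm, pow_succ]
  field_simp

lemma Gwz_eq_mul_Fwz (hk : k ≤ m) :
    Gwz j m k = 2 * (m + 1) * (k - j) ^ 2 / ((m + j + 1) ^ 2 * (m - k + 1)) * Fwz j m k := by
  unfold Fwz Gwz
  rw [ichoose_succ_succ _ (by omega)]
  push_cast
  field_simp

lemma Gwz_succ_right_eq_mul_Fwz (hjk : j ≤ k) (hk : k ≤ m) :
    Gwz j m (k + 1) = -(2 * (m + 1) * (m + k + 1) / (m + j + 1) ^ 2) * Fwz j m k := by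
  have hjk' : (j : ℚ) ≤ k := by exact_mod_cast hjk
  have := ichoose_sub_ne_zero (hjk.trans hk)
  have := catalan_ne_zero j
  unfold Fwz Gwz
  rw [← add_assoc, show (m : ℤ) - (k + 1 : ℕ) + 1 = m - k by push_cast; ring,
    ichoose_succ_left _ (by omega), ichoose_succ_left _ (by omega),
    cast_choose_succ_left (n := k + 1) (by omega), cast_choose_succ_left hjk, cast_catalan_succ,
    pow_succ]
  push_cast
  have : (m + k + 1 + 1 - (m - k) : ℚ) ≠ 0 := by linarith
  have : (m + k + 1 - (m - k) : ℚ) ≠ 0 := by linarith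
  have : (k + 1 + 1 - (j + 1) : ℚ) ≠ 0 := by linarith
  have : (k + 1 - j : ℚ) ≠ 0 := by linarith
  field_simp
  ring

lemma Gwz_succ_diag_eq_neg_Fwz (hj : j ≤ m) : Gwz j m (m + 1) = -Fwz j (m + 1) (m + 1) := by
  have := ichoose_sub_ne_zero hj
  have := catalan_ne_zero j
  unfold Fwz Gwz
  rw [ichoose_succ_add_sub hj, show (m : ℤ) - (m + 1 : ℕ) + 1 = (0 : ℕ) by omega,
    show ((m + 1 : ℕ) : ℤ) - (m + 1 : ℕ) = (0 : ℕ) by omega, ichoose_natCast, ichoose_natCast,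
    show m + 1 + (m + 1) = m + (m + 1) + 1 by ring, pow_succ]
  push_cast [Nat.choose_zero_right]
  field_simp
  ring

end

theorem wz_pair_identity_general (i j : ℕ) (hj : j ≤ i) (k : ℕ) :
    Fwz j (i + 1) k - Fwz j i k = Gwz j i (k + 1) - Gwz j i k := by
  rcases lt_or_ge k j with hkj | hjk
  · rw [Fwz_eq_zero_of_lt_param hkj, Fwz_eq_zero_of_lt_param hkj,
      Gwz_eq_zero_of_le_param hkj, Gwz_eq_zero_of_le_param hkj.le]
  rcases le_or_gt k i with hki | hik
  · have : (i - k + 1 : ℚ) ≠ 0 := by linarith [(Nat.cast_le (α := ℚ)).2 hki]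
    rw [Fwz_succ_left_eq_mul_Fwz hki hj, Gwz_succ_right_eq_mul_Fwz hjk hki, Gwz_eq_mul_Fwz hki]
    field_simp
    ring
  obtain rfl | hik : k = i + 1 ∨ i + 1 < k := by omega
  · rw [Fwz_eq_zero_of_lt (lt_add_one i), Gwz_eq_zero_of_succ_lt (lt_add_one _),
      Gwz_succ_diag_eq_neg_Fwz hj, sub_zero, zero_sub, neg_neg]
  · rw [Fwz_eq_zero_of_lt hik, Fwz_eq_zero_of_lt (by omega), Gwz_eq_zero_of_succ_lt (by omega),
      Gwz_eq_zero_of_succ_lt hik]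

theorem wz_pair_identity (i j : ℕ) (hi : 1 ≤ i) (hj : j ≤ i) (k : ℕ) :
    Fwz j (i + 1) k - Fwz j i k = Gwz j i (k + 1) - Gwz j i k :=
  wz_pair_identity_general i j hj k
end

section
/- For every parallelogram polyomino P, the set S(P) of cells of P that are first in their row or first in their column is a non-ambiguous tree. -/
/-- A non-ambiguous tree: a finite set of points of `ℕ × ℕ`. -/
def IsNAT (A : Finset (ℕ × ℕ)) : Prop :=
  (0, 0) ∈ A ∧
  (∀ p ∈ A, p ≠ (0, 0) →
    Xor' (∃ q ∈ A, q.1 = p.1 ∧ q.2 < p.2) (∃ r ∈ A, r.2 = p.2 ∧ r.1 < p.1)) ∧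
  (∀ p ∈ A, (∀ x' < p.1, ∃ q ∈ A, q.1 = x') ∧ (∀ y' < p.2, ∃ q ∈ A, q.2 = y'))

/-- A parallelogram polyomino, as a finite set of unit cells. -/
def IsPP (P : Finset (ℕ × ℕ)) : Prop :=
  ∃ (h : ℕ) (l r : ℕ → ℕ),
    (∀ p ∈ P, p.1 ≤ h) ∧
    (∀ x ≤ h, ∀ y : ℕ, ((x, y) ∈ P ↔ l x ≤ y ∧ y ≤ r x)) ∧
    (∀ x ≤ h, l x ≤ r x) ∧
    l 0 = 0 ∧
    (∀ x < h, l x ≤ l (x + 1) ∧ r x ≤ r (x + 1) ∧ l (x + 1) ≤ r x)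

/-- The cells of `P` that are enlightened: first in their row or first in their column. -/
def SP (P : Finset (ℕ × ℕ)) : Finset (ℕ × ℕ) :=
  P.filter (fun p => (∀ y' < p.2, (p.1, y') ∉ P) ∨ (∀ x' < p.1, (x', p.2) ∉ P))

/-!
Every row and every column of `P` that is occupied at all has a first cell, and that cell lies in
`S(P)`. Hence a cell of `S(P)` has a predecessor of `S(P)` in its row (resp. column) exactly when it
is not first in its row (resp. column), so the non-ambiguity condition says that no cell other than
the root is first in both its row and its column. In a parallelogram polyomino the first cell
`(x, l x)` of a row `x > 0` is preceded in its column by `(x - 1, l x)`, because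
`l (x - 1) ≤ l x ≤ r (x - 1)`. The projections of `P` onto both axes are initial segments, which
gives the remaining condition.
-/

def IsFirstInRow (P : Finset (ℕ × ℕ)) (p : ℕ × ℕ) : Prop :=
  ∀ y < p.2, (p.1, y) ∉ P

def IsFirstInCol (P : Finset (ℕ × ℕ)) (p : ℕ × ℕ) : Prop :=
  ∀ x < p.1, (x, p.2) ∉ P

section FirstCells

variable {P : Finset (ℕ × ℕ)}

theorem mem_SP_iff {p : ℕ × ℕ} :
    p ∈ SP P ↔ p ∈ P ∧ (IsFirstInRow P p ∨ IsFirstInCol P p) :=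
  Finset.mem_filter

theorem exists_mem_SP_row_le {x y : ℕ} (hxy : (x, y) ∈ P) :
    ∃ q ∈ SP P, q.1 = x ∧ q.2 ≤ y := by
  have hrow : ∃ y, (x, y) ∈ P := ⟨y, hxy⟩
  exact ⟨(x, Nat.find hrow), mem_SP_iff.2 ⟨Nat.find_spec hrow, Or.inl fun _ => Nat.find_min hrow⟩,
    rfl, Nat.find_min' hrow hxy⟩

theorem exists_mem_SP_col_le {x y : ℕ} (hxy : (x, y) ∈ P) :
    ∃ q ∈ SP P, q.2 = y ∧ q.1 ≤ x := by
  have hcol : ∃ x, (x, y) ∈ P := ⟨x, hxy⟩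
  exact ⟨(Nat.find hcol, y), mem_SP_iff.2 ⟨Nat.find_spec hcol, Or.inr fun _ => Nat.find_min hcol⟩,
    rfl, Nat.find_min' hcol hxy⟩

theorem exists_mem_SP_row_lt_iff {p : ℕ × ℕ} :
    (∃ q ∈ SP P, q.1 = p.1 ∧ q.2 < p.2) ↔ ¬IsFirstInRow P p := by
  simp only [IsFirstInRow, not_forall, not_not]
  constructor
  · rintro ⟨⟨x, y⟩, hq, rfl, hy⟩
    exact ⟨y, hy, (mem_SP_iff.1 hq).1⟩
  · rintro ⟨y, hy, hmem⟩
    obtain ⟨q, hq, hq1, hq2⟩ := exists_mem_SP_row_le hmem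
    exact ⟨q, hq, hq1, hq2.trans_lt hy⟩

theorem exists_mem_SP_col_lt_iff {p : ℕ × ℕ} :
    (∃ q ∈ SP P, q.2 = p.2 ∧ q.1 < p.1) ↔ ¬IsFirstInCol P p := by
  simp only [IsFirstInCol, not_forall, not_not]
  constructor
  · rintro ⟨⟨x, y⟩, hq, rfl, hx⟩
    exact ⟨x, hx, (mem_SP_iff.1 hq).1⟩
  · rintro ⟨x, hx, hmem⟩
    obtain ⟨q, hq, hq2, hq1⟩ := exists_mem_SP_col_le hmem
    exact ⟨q, hq, hq2, hq1.trans_lt hx⟩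

theorem isNAT_SP (hzero : (0, 0) ∈ P)
    (hrows : ∀ p ∈ P, ∀ x < p.1, ∃ y, (x, y) ∈ P)
    (hcols : ∀ p ∈ P, ∀ y < p.2, ∃ x, (x, y) ∈ P)
    (hcorner : ∀ p ∈ P, IsFirstInRow P p → IsFirstInCol P p → p = (0, 0)) :
    IsNAT (SP P) := by
  refine ⟨mem_SP_iff.2 ⟨hzero, Or.inl fun _ h => absurd h (Nat.not_lt_zero _)⟩, ?_, ?_⟩
  · intro p hp hne
    obtain ⟨hpP, hfirst⟩ := mem_SP_iff.1 hp
    have hnot_both : ¬(IsFirstInRow P p ∧ IsFirstInCol P p) :=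
      fun h => hne (hcorner p hpP h.1 h.2)
    rw [exists_mem_SP_row_lt_iff, exists_mem_SP_col_lt_iff]
    show (_ ∧ ¬_) ∨ (_ ∧ ¬_)
    tauto
  · intro p hp
    have hpP := (mem_SP_iff.1 hp).1
    refine ⟨fun x hx => ?_, fun y hy => ?_⟩
    · obtain ⟨y, hxy⟩ := hrows p hpP x hx
      obtain ⟨q, hq, hq1, -⟩ := exists_mem_SP_row_le hxy
      exact ⟨q, hq, hq1⟩
    · obtain ⟨x, hxy⟩ := hcols p hpP y hy
      obtain ⟨q, hq, hq2, -⟩ := exists_mem_SP_col_le hxy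
      exact ⟨q, hq, hq2⟩

end FirstCells

namespace IsPP

variable {P : Finset (ℕ × ℕ)}

theorem zero_mem (hP : IsPP P) : (0, 0) ∈ P := by
  obtain ⟨h, l, r, -, hmem, hlr, hl0, -⟩ := hP
  simpa [hl0] using (hmem 0 h.zero_le (l 0)).2 ⟨le_rfl, hlr 0 h.zero_le⟩

theorem exists_mem_row_of_lt (hP : IsPP P) :
    ∀ p ∈ P, ∀ x < p.1, ∃ y, (x, y) ∈ P := by
  obtain ⟨h, l, r, hbound, hmem, hlr, -, -⟩ := hP
  intro p hp x hx
  have hxh : x ≤ h := hx.le.trans (hbound p hp)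
  exact ⟨l x, (hmem x hxh (l x)).2 ⟨le_rfl, hlr x hxh⟩⟩

theorem exists_mem_col_of_lt (hP : IsPP P) :
    ∀ p ∈ P, ∀ y < p.2, ∃ x, (x, y) ∈ P := by
  obtain ⟨h, l, r, hbound, hmem, -, hl0, hstep⟩ := hP
  suffices hcol : ∀ x ≤ h, ∀ y ≤ r x, ∃ x', (x', y) ∈ P by
    rintro ⟨x, y'⟩ hp y hy
    have hxh := hbound _ hp
    exact hcol x hxh y (hy.le.trans ((hmem x hxh y').1 hp).2)
  intro x
  induction x with
  | zero => exact fun h0 y hy => ⟨0, (hmem 0 h0 y).2 ⟨by rw [hl0]; exact y.zero_le, hy⟩⟩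
  | succ x ih =>
    intro hxh y hy
    by_cases hly : l (x + 1) ≤ y
    · exact ⟨x + 1, (hmem _ hxh y).2 ⟨hly, hy⟩⟩
    · exact ih (by omega) y (by have := (hstep x hxh).2.2; omega)

theorem eq_zero_of_isFirstInRow_of_isFirstInCol (hP : IsPP P) :
    ∀ p ∈ P, IsFirstInRow P p → IsFirstInCol P p → p = (0, 0) := by
  obtain ⟨h, l, r, hbound, hmem, hlr, hl0, hstep⟩ := hP
  rintro ⟨x, y⟩ hp hrow hcol
  have hxh := hbound _ hp
  have hy : y = l x := by
    refine le_antisymm (not_lt.1 fun hlt => hrow (l x) hlt ?_) ((hmem x hxh y).1 hp).1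
    exact (hmem x hxh (l x)).2 ⟨le_rfl, hlr x hxh⟩
  subst hy
  cases x with
  | zero => rw [hl0]
  | succ x =>
    obtain ⟨hl, -, hl_le_r⟩ := hstep x hxh
    exact absurd ((hmem x (by omega) _).2 ⟨hl, hl_le_r⟩) (hcol x x.lt_succ_self)

end IsPP

theorem sp_is_nat (P : Finset (ℕ × ℕ)) (hP : IsPP P) : IsNAT (SP P) :=
  isNAT_SP hP.zero_mem hP.exists_mem_row_of_lt
    hP.exists_mem_col_of_lt hP.eq_zero_of_isFirstInRow_of_isFirstInCol
end

section
/- Let P and P' be parallelogram polyominoes. If the non-ambiguous trees S(P) and S(P') are isomorphic (i.e. P and P' have the same underlying binary tree), then P = P'. -/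
/-- `q` is the parent of `p`, with `p` a left child, in the non-ambiguous tree `A`. -/
def LeftParent (A : Finset (ℕ × ℕ)) (p q : ℕ × ℕ) : Prop :=
  p ∈ A ∧ q ∈ A ∧ q.2 = p.2 ∧ q.1 < p.1 ∧
    ∀ r ∈ A, r.2 = p.2 → r.1 < p.1 → r.1 ≤ q.1

/-- `q` is the parent of `p`, with `p` a right child, in the non-ambiguous tree `A`. -/
def RightParent (A : Finset (ℕ × ℕ)) (p q : ℕ × ℕ) : Prop :=
  p ∈ A ∧ q ∈ A ∧ q.1 = p.1 ∧ q.2 < p.2 ∧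
    ∀ r ∈ A, r.1 = p.1 → r.2 < p.2 → r.2 ≤ q.2

/-- Two non-ambiguous trees are isomorphic (have the same underlying binary tree). -/
def NATIso (A A' : Finset (ℕ × ℕ)) : Prop :=
  ∃ f : ℕ × ℕ → ℕ × ℕ, Set.BijOn f (↑A) (↑A') ∧ f (0, 0) = (0, 0) ∧
    ∀ p ∈ A, ∀ q ∈ A,
      (LeftParent A p q ↔ LeftParent A' (f p) (f q)) ∧
      (RightParent A p q ↔ RightParent A' (f p) (f q))

def IsRowFirst (P : Finset (ℕ × ℕ)) (p : ℕ × ℕ) : Prop :=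
  ∀ y < p.2, (p.1, y) ∉ P

def IsColFirst (P : Finset (ℕ × ℕ)) (p : ℕ × ℕ) : Prop :=
  ∀ x < p.1, (x, p.2) ∉ P

section Enlightened

variable {P : Finset (ℕ × ℕ)} {p q : ℕ × ℕ}

theorem mem_SP : p ∈ SP P ↔ p ∈ P ∧ (IsRowFirst P p ∨ IsColFirst P p) :=
  Finset.mem_filter

theorem SP_subset : SP P ⊆ P :=
  Finset.filter_subset _ _

theorem exists_fst_le_mem_SP {x y : ℕ} (h : (x, y) ∈ P) : ∃ x' ≤ x, (x', y) ∈ SP P := by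
  classical
  have hex : ∃ x', (x', y) ∈ P := ⟨x, h⟩
  exact ⟨Nat.find hex, Nat.find_min' hex h,
    mem_SP.2 ⟨Nat.find_spec hex, Or.inr fun _ => Nat.find_min hex⟩⟩

theorem exists_snd_le_mem_SP {x y : ℕ} (h : (x, y) ∈ P) : ∃ y' ≤ y, (x, y') ∈ SP P := by
  classical
  have hex : ∃ y', (x, y') ∈ P := ⟨y, h⟩
  exact ⟨Nat.find hex, Nat.find_min' hex h,
    mem_SP.2 ⟨Nat.find_spec hex, Or.inl fun _ => Nat.find_min hex⟩⟩

theorem exists_lt_mem_SP_of_not_isColFirst (h : ¬IsColFirst P p) :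
    ∃ c < p.1, (c, p.2) ∈ SP P := by
  obtain ⟨c, hc, hcP⟩ : ∃ c < p.1, (c, p.2) ∈ P := by simpa [IsColFirst] using h
  obtain ⟨c', hc', hc'S⟩ := exists_fst_le_mem_SP hcP
  exact ⟨c', hc'.trans_lt hc, hc'S⟩

theorem exists_lt_mem_SP_of_not_isRowFirst (h : ¬IsRowFirst P p) :
    ∃ c < p.2, (p.1, c) ∈ SP P := by
  obtain ⟨c, hc, hcP⟩ : ∃ c < p.2, (p.1, c) ∈ P := by simpa [IsRowFirst] using h
  obtain ⟨c', hc', hc'S⟩ := exists_snd_le_mem_SP hcP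
  exact ⟨c', hc'.trans_lt hc, hc'S⟩

theorem RightParent.isColFirst (h : RightParent (SP P) p q) : IsColFirst P p := by
  obtain ⟨hp, hq, hq1, hq2, -⟩ := h
  refine (mem_SP.1 hp).2.resolve_left fun hrow => hrow q.2 hq2 ?_
  simpa [← hq1] using SP_subset hq

theorem LeftParent.isRowFirst (h : LeftParent (SP P) p q) : IsRowFirst P p := by
  obtain ⟨hp, hq, hq2, hq1, -⟩ := h
  refine (mem_SP.1 hp).2.resolve_right fun hcol => hcol q.1 hq1 ?_
  simpa [← hq2] using SP_subset hq

end Enlightened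

section Parents

variable {A : Finset (ℕ × ℕ)} {p q : ℕ × ℕ}

theorem exists_rightParent (hp : p ∈ A) (h : ∃ e ∈ A, e.1 = p.1 ∧ e.2 < p.2) :
    ∃ q, RightParent A p q := by
  classical
  obtain ⟨q, hq, hmax⟩ := Finset.exists_max_image (A.filter fun e => e.1 = p.1 ∧ e.2 < p.2)
    Prod.snd (by simpa [Finset.Nonempty] using h)
  obtain ⟨hqA, hq1, hq2⟩ := Finset.mem_filter.1 hq
  exact ⟨q, hp, hqA, hq1, hq2,
    fun e he he1 he2 => hmax e (Finset.mem_filter.2 ⟨he, he1, he2⟩)⟩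

theorem exists_leftParent (hp : p ∈ A) (h : ∃ e ∈ A, e.2 = p.2 ∧ e.1 < p.1) :
    ∃ q, LeftParent A p q := by
  classical
  obtain ⟨q, hq, hmax⟩ := Finset.exists_max_image (A.filter fun e => e.2 = p.2 ∧ e.1 < p.1)
    Prod.fst (by simpa [Finset.Nonempty] using h)
  obtain ⟨hqA, hq2, hq1⟩ := Finset.mem_filter.1 hq
  exact ⟨q, hp, hqA, hq2, hq1,
    fun e he he2 he1 => hmax e (Finset.mem_filter.2 ⟨he, he2, he1⟩)⟩

theorem RightParent.lt (h : RightParent A p q) : q < p :=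
  Prod.lt_iff.2 (Or.inr ⟨h.2.2.1.le, h.2.2.2.1⟩)

theorem LeftParent.lt (h : LeftParent A p q) : q < p :=
  Prod.lt_iff.2 (Or.inl ⟨h.2.2.2.1, h.2.2.1.le⟩)

end Parents

namespace IsPP

variable {P : Finset (ℕ × ℕ)}

theorem exists_monotone (hP : IsPP P) :
    ∃ (h : ℕ) (l r : ℕ → ℕ), Monotone l ∧ Monotone r ∧ l 0 = 0 ∧
      (∀ x < h, l (x + 1) ≤ r x) ∧
      ∀ x y, (x, y) ∈ P ↔ x ≤ h ∧ l x ≤ y ∧ y ≤ r x := by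
  obtain ⟨h, l, r, hbound, hmem, -, hl0, hstep⟩ := hP
  have hmono (s : ℕ → ℕ) (hs : ∀ x < h, s x ≤ s (x + 1)) :
      Monotone fun x => s (min x h) := by
    refine monotone_nat_of_le_succ fun x => ?_
    rcases lt_or_ge x h with hx | hx
    · rw [min_eq_left hx.le, min_eq_left (Nat.succ_le_of_lt hx)]
      exact hs x hx
    · rw [min_eq_right hx, min_eq_right (by omega)]
  refine ⟨h, fun x => l (min x h), fun x => r (min x h), hmono l fun x hx => (hstep x hx).1,
    hmono r fun x hx => (hstep x hx).2.1, by simpa using hl0, fun x hx => ?_, fun x y => ?_⟩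
  · show l (min (x + 1) h) ≤ r (min x h)
    rw [min_eq_left (Nat.succ_le_of_lt hx), min_eq_left hx.le]
    exact (hstep x hx).2.2
  · refine ⟨fun hxy => ?_, fun ⟨hx, hy⟩ => ?_⟩
    · have hx := hbound _ hxy
      exact ⟨hx, by simpa [min_eq_left hx] using (hmem x hx y).1 hxy⟩
    · exact (hmem x hx y).2 (by simpa [min_eq_left hx] using hy)

theorem mem_of_snd_mem_Icc (hP : IsPP P) {x t u v : ℕ} (ht : (x, t) ∈ P) (hv : (x, v) ∈ P)
    (hu : u ∈ Set.Icc t v) : (x, u) ∈ P := by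
  obtain ⟨h, l, r, -, -, -, -, hmem⟩ := hP.exists_monotone
  rw [hmem] at ht hv ⊢
  exact ⟨ht.1, ht.2.1.trans hu.1, hu.2.trans hv.2.2⟩

theorem mem_of_fst_mem_Icc (hP : IsPP P) {t u v y : ℕ} (ht : (t, y) ∈ P) (hv : (v, y) ∈ P)
    (hu : u ∈ Set.Icc t v) : (u, y) ∈ P := by
  obtain ⟨h, l, r, hl, hr, -, -, hmem⟩ := hP.exists_monotone
  rw [hmem] at ht hv ⊢
  exact ⟨hu.2.trans hv.1, (hl hu.2).trans hv.2.1, ht.2.2.trans (hr hu.1)⟩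

theorem mem_of_mem_of_mem (hP : IsPP P) {x x' y y' : ℕ} (hrow : (x, y') ∈ P)
    (hcol : (x', y) ∈ P) (hy : y' ≤ y) (hx : x' ≤ x) : (x, y) ∈ P := by
  obtain ⟨h, l, r, -, hr, -, -, hmem⟩ := hP.exists_monotone
  rw [hmem] at hrow hcol ⊢
  exact ⟨hrow.1, hrow.2.1.trans hy, hcol.2.2.trans (hr hx)⟩

theorem eq_zero_of_isRowFirst_of_isColFirst (hP : IsPP P) {p : ℕ × ℕ} (hp : p ∈ P)
    (hrow : IsRowFirst P p) (hcol : IsColFirst P p) : p = (0, 0) := by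
  obtain ⟨h, l, r, hl, -, hl0, hstep, hmem⟩ := hP.exists_monotone
  obtain ⟨x, y⟩ := p
  obtain ⟨hx, hly, hyr⟩ := (hmem x y).1 hp
  have hy : l x = y := by
    by_contra hne
    exact hrow (l x) (by simp only; omega) ((hmem x (l x)).2 ⟨hx, le_rfl, by omega⟩)
  cases x with
  | zero => simp [← hy, hl0]
  | succ x =>
    refine absurd ((hmem x y).2 ⟨by omega, ?_, ?_⟩) (hcol x x.lt_succ_self)
    · exact hy ▸ hl x.le_succ
    · exact hy ▸ hstep x (by omega)

theorem mem_iff_exists_SP (hP : IsPP P) {x y : ℕ} :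
    (x, y) ∈ P ↔ (∃ y' ≤ y, (x, y') ∈ SP P) ∧ ∃ x' ≤ x, (x', y) ∈ SP P := by
  refine ⟨fun h => ⟨exists_snd_le_mem_SP h, exists_fst_le_mem_SP h⟩, ?_⟩
  rintro ⟨⟨y', hy, hrow⟩, ⟨x', hx, hcol⟩⟩
  exact hP.mem_of_mem_of_mem (SP_subset hrow) (SP_subset hcol) hy hx

theorem eq_of_SP_eq {Q : Finset (ℕ × ℕ)} (hP : IsPP P) (hQ : IsPP Q) (h : SP P = SP Q) :
    P = Q := by
  ext ⟨x, y⟩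
  rw [hP.mem_iff_exists_SP, hQ.mem_iff_exists_SP, h]

end IsPP

section Comparison

variable {P Q : Finset (ℕ × ℕ)} {p p' q : ℕ × ℕ}

theorem exists_mem_SP_not_mem_of_rightParent (hP : IsPP P) (hp : RightParent (SP P) p q)
    (hp' : RightParent (SP Q) p' q) (hlt : p'.2 < p.2) :
    ∃ c < p.1, (c, p'.2) ∈ SP P ∧ (c, p'.2) ∉ Q := by
  have hcolQ := hp'.isColFirst
  obtain ⟨x, y⟩ := p
  obtain ⟨x', w⟩ := p'
  obtain ⟨hpS, hqS, hq1, hq2, hmax⟩ := hp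
  obtain ⟨-, -, hq1', hq2', -⟩ := hp'
  dsimp only at *
  subst hq1 hq1'
  have hw : (q.1, w) ∈ P :=
    hP.mem_of_snd_mem_Icc (SP_subset hqS) (SP_subset hpS) ⟨hq2'.le, hlt.le⟩
  have hcol : ¬IsColFirst P (q.1, w) := fun hcol =>
    (hmax _ (mem_SP.2 ⟨hw, Or.inr hcol⟩) rfl hlt).not_gt hq2'
  obtain ⟨c, hc, hcS⟩ := exists_lt_mem_SP_of_not_isColFirst hcol
  exact ⟨c, hc, hcS, hcolQ c hc⟩

theorem exists_mem_SP_not_mem_of_leftParent (hP : IsPP P) (hp : LeftParent (SP P) p q)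
    (hp' : LeftParent (SP Q) p' q) (hlt : p'.1 < p.1) :
    ∃ c < p.2, (p'.1, c) ∈ SP P ∧ (p'.1, c) ∉ Q := by
  have hrowQ := hp'.isRowFirst
  obtain ⟨x, y⟩ := p
  obtain ⟨x', w⟩ := p'
  obtain ⟨hpS, hqS, hq2, hq1, hmax⟩ := hp
  obtain ⟨-, -, hq2', hq1', -⟩ := hp'
  dsimp only at *
  subst hq2 hq2'
  have hx : (x', q.2) ∈ P :=
    hP.mem_of_fst_mem_Icc (SP_subset hqS) (SP_subset hpS) ⟨hq1'.le, hlt.le⟩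
  have hrow : ¬IsRowFirst P (x', q.2) := fun hrow =>
    (hmax _ (mem_SP.2 ⟨hx, Or.inl hrow⟩) rfl hlt).not_gt hq1'
  obtain ⟨c, hc, hcS⟩ := exists_lt_mem_SP_of_not_isRowFirst hrow
  exact ⟨c, hc, hcS, hrowQ c hc⟩

theorem eq_of_rightParent_of_rightParent (hP : IsPP P) (hQ : IsPP Q)
    (hp : RightParent (SP P) p q) (hp' : RightParent (SP Q) p' q)
    (hPQ : ∀ r < p, r ∈ SP P → r ∈ Q) (hQP : ∀ r < p, r ∈ SP Q → r ∈ P) :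
    p' = p := by
  have h1 : p'.1 = p.1 := hp'.2.2.1.symm.trans hp.2.2.1
  refine Prod.ext h1 ?_
  rcases lt_trichotomy p'.2 p.2 with hlt | heq | hgt
  · obtain ⟨c, hc, hcS, hcQ⟩ := exists_mem_SP_not_mem_of_rightParent hP hp hp' hlt
    exact absurd (hPQ (c, p'.2) (Prod.lt_iff.2 (Or.inl ⟨hc, hlt.le⟩)) hcS) hcQ
  · exact heq
  · obtain ⟨c, hc, hcS, hcP⟩ := exists_mem_SP_not_mem_of_rightParent hQ hp' hp hgt
    exact absurd (hQP (c, p.2) (Prod.lt_iff.2 (Or.inl ⟨h1 ▸ hc, le_rfl⟩)) hcS) hcP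

theorem eq_of_leftParent_of_leftParent (hP : IsPP P) (hQ : IsPP Q)
    (hp : LeftParent (SP P) p q) (hp' : LeftParent (SP Q) p' q)
    (hPQ : ∀ r < p, r ∈ SP P → r ∈ Q) (hQP : ∀ r < p, r ∈ SP Q → r ∈ P) :
    p' = p := by
  have h2 : p'.2 = p.2 := hp'.2.2.1.symm.trans hp.2.2.1
  refine Prod.ext ?_ h2
  rcases lt_trichotomy p'.1 p.1 with hlt | heq | hgt
  · obtain ⟨c, hc, hcS, hcQ⟩ := exists_mem_SP_not_mem_of_leftParent hP hp hp' hlt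
    exact absurd (hPQ (p'.1, c) (Prod.lt_iff.2 (Or.inl ⟨hlt, hc.le⟩)) hcS) hcQ
  · exact heq
  · obtain ⟨c, hc, hcS, hcP⟩ := exists_mem_SP_not_mem_of_leftParent hQ hp' hp hgt
    exact absurd (hQP (p.1, c) (Prod.lt_iff.2 (Or.inr ⟨le_rfl, h2 ▸ hc⟩)) hcS) hcP

end Comparison

structure IsNATHom (A B : Finset (ℕ × ℕ)) (f : ℕ × ℕ → ℕ × ℕ) : Prop where
  map_root : f (0, 0) = (0, 0)
  mapsTo : ∀ p ∈ A, f p ∈ B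
  leftParent : ∀ {p q}, LeftParent A p q → LeftParent B (f p) (f q)
  rightParent : ∀ {p q}, RightParent A p q → RightParent B (f p) (f q)

theorem NATIso.exists_isNATHom {A B : Finset (ℕ × ℕ)} (h : NATIso A B) (h0 : (0, 0) ∈ A) :
    (∃ f, IsNATHom A B f) ∧ ∃ g, IsNATHom B A g := by
  obtain ⟨f, hbij, hf0, hpar⟩ := h
  have hinv := hbij.invOn_invFunOn
  set g := Function.invFunOn f A
  have hg : ∀ p ∈ B, g p ∈ A := fun p hp => hbij.surjOn.mapsTo_invFunOn hp
  have hpar' : ∀ p ∈ B, ∀ q ∈ B,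
      (LeftParent B p q → LeftParent A (g p) (g q)) ∧
      (RightParent B p q → RightParent A (g p) (g q)) := by
    intro p hp q hq
    have := hpar (g p) (hg p hp) (g q) (hg q hq)
    rw [hinv.2 hp, hinv.2 hq] at this
    exact ⟨this.1.2, this.2.2⟩
  refine ⟨⟨f, hf0, fun p hp => hbij.mapsTo hp, fun h => (hpar _ h.1 _ h.2.1).1.1 h,
    fun h => (hpar _ h.1 _ h.2.1).2.1 h⟩,
    ⟨g, ?_, hg, fun h => (hpar' _ h.1 _ h.2.1).1 h, fun h => (hpar' _ h.1 _ h.2.1).2 h⟩⟩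
  simpa [hf0] using hinv.1 h0

namespace IsNATHom

variable {P Q : Finset (ℕ × ℕ)} {f g : ℕ × ℕ → ℕ × ℕ}

theorem apply_eq_self_of_forall_lt (hP : IsPP P) (hQ : IsPP Q) (hf : IsNATHom (SP P) (SP Q) f)
    {p : ℕ × ℕ} (ihf : ∀ r < p, r ∈ SP P → f r = r)
    (hQP : ∀ r < p, r ∈ SP Q → r ∈ SP P) (hp : p ∈ SP P) : f p = p := by
  have hPQ : ∀ r < p, r ∈ SP P → r ∈ Q := fun r hr hrS =>
    SP_subset (ihf r hr hrS ▸ hf.mapsTo r hrS)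
  have hQP' : ∀ r < p, r ∈ SP Q → r ∈ P := fun r hr hrS => SP_subset (hQP r hr hrS)
  by_cases hrow : IsRowFirst P p
  · by_cases hcol : IsColFirst P p
    · rw [hP.eq_zero_of_isRowFirst_of_isColFirst (SP_subset hp) hrow hcol, hf.map_root]
    · obtain ⟨c, hc, hcS⟩ := exists_lt_mem_SP_of_not_isColFirst hcol
      obtain ⟨q, hq⟩ := exists_leftParent hp ⟨_, hcS, rfl, hc⟩
      have hq' := hf.leftParent hq
      rw [ihf q hq.lt hq.2.1] at hq'
      exact eq_of_leftParent_of_leftParent hP hQ hq hq' hPQ hQP'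
  · obtain ⟨c, hc, hcS⟩ := exists_lt_mem_SP_of_not_isRowFirst hrow
    obtain ⟨q, hq⟩ := exists_rightParent hp ⟨_, hcS, rfl, hc⟩
    have hq' := hf.rightParent hq
    rw [ihf q hq.lt hq.2.1] at hq'
    exact eq_of_rightParent_of_rightParent hP hQ hq hq' hPQ hQP'

theorem SP_eq (hP : IsPP P) (hQ : IsPP Q) (hf : IsNATHom (SP P) (SP Q) f)
    (hg : IsNATHom (SP Q) (SP P) g) : SP P = SP Q := by
  have hfix : ∀ p, (p ∈ SP P → f p = p) ∧ (p ∈ SP Q → g p = p) := by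
    intro p
    induction p using WellFoundedLT.induction with
    | _ p ih =>
      have hPQ : ∀ r < p, r ∈ SP P → r ∈ SP Q := fun r hr hrS =>
        (ih r hr).1 hrS ▸ hf.mapsTo r hrS
      have hQP : ∀ r < p, r ∈ SP Q → r ∈ SP P := fun r hr hrS =>
        (ih r hr).2 hrS ▸ hg.mapsTo r hrS
      exact ⟨hf.apply_eq_self_of_forall_lt hP hQ (fun r hr => (ih r hr).1) hQP,
        hg.apply_eq_self_of_forall_lt hQ hP (fun r hr => (ih r hr).2) hPQ⟩
  ext p
  exact ⟨fun hp => (hfix p).1 hp ▸ hf.mapsTo p hp, fun hp => (hfix p).2 hp ▸ hg.mapsTo p hp⟩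

end IsNATHom

theorem pp_injective_on_trees (P P' : Finset (ℕ × ℕ)) (hP : IsPP P) (hP' : IsPP P')
    (h : NATIso (SP P) (SP P')) : P = P' := by
  have hroot : (0, 0) ∈ SP P :=
    mem_SP.2 ⟨hP.zero_mem, Or.inl fun _ h => absurd h (Nat.not_lt_zero _)⟩
  obtain ⟨⟨f, hf⟩, ⟨g, hg⟩⟩ := h.exists_isNATHom hroot
  exact hP.eq_of_SP_eq hP' (hf.SP_eq hP hP' hg)
end

section
/- For every integer n ≥ 1, the number of parallelogram polyominoes of size n equals the n-th Catalan number Cat_n (the number of binary trees with n vertices). -/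
/-- The size of a parallelogram polyomino: its number of rows plus its number of
columns, minus 1. -/
def ppSize (P : Finset (ℕ × ℕ)) : ℕ :=
  (P.image Prod.fst).card + (P.image Prod.snd).card - 1

/-!
Row by row, a parallelogram polyomino is recorded as a lattice path: the first row `[0, r₀]` as
`r₀ + 1` up steps, each further row `[l, r]` following a row `[l', r']` as `l - l' + 1` down steps
and then `r - r' + 1` up steps, and the last row `[l, r]` is closed by `r - l + 1` down steps.
After the steps of a row `[l, r]` the path is at height `r - l + 1`, and in between it descends to
`r' - l`, which is `≥ 0` exactly because consecutive rows overlap. So the path is a Dyck path, of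
semilength the number of rows plus the last right end, i.e. the size. All run lengths are
positive, so the rows can be read back from the runs of any nonempty Dyck path: this is a
bijection onto the Dyck paths of semilength `n ≥ 1`, which are counted by `Cat_n`.
-/

namespace ParallelogramPolyomino

open List DyckStep

lemma exists_eq_replicate_append {α : Type*} (x : α) :
    ∀ w : List α, ∃ k s, w = replicate k x ++ s ∧ s.head? ≠ some x
  | [] => ⟨0, [], rfl, by simp⟩
  | y :: w => by
    by_cases hy : y = x
    · obtain ⟨k, s, rfl, hs⟩ := exists_eq_replicate_append x w
      exact ⟨k + 1, s, by simp [hy, replicate_succ], hs⟩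
    · exact ⟨0, y :: w, rfl, by simpa using hy⟩

lemma replicate_append_inj {α : Type*} {x : α} {s s' : List α} {k k' : ℕ}
    (hs : s.head? ≠ some x) (hs' : s'.head? ≠ some x)
    (h : replicate k x ++ s = replicate k' x ++ s') : k = k' ∧ s = s' := by
  induction k generalizing k' with
  | zero =>
    cases k' with
    | zero => exact ⟨rfl, h⟩
    | succ k' => simp only [replicate_zero, nil_append] at h; simp [h, replicate_succ] at hs
  | succ k ih =>
    cases k' with
    | zero => simp only [replicate_zero, nil_append] at h; simp [← h, replicate_succ] at hs'
    | succ k' => simpa using ih (by simpa [replicate_succ] using h)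

/-- The path `w`, started at height `k`, stays weakly above `0` and ends at `0`. -/
def IsDyckFrom : ℕ → List DyckStep → Prop
  | k, [] => k = 0
  | k, U :: w => IsDyckFrom (k + 1) w
  | k, D :: w => 0 < k ∧ IsDyckFrom (k - 1) w

lemma isDyckFrom_replicate_U_append {k u : ℕ} {w : List DyckStep} :
    IsDyckFrom k (replicate u U ++ w) ↔ IsDyckFrom (k + u) w := by
  induction u generalizing k with
  | zero => rfl
  | succ u ih => simp only [replicate_succ, cons_append, IsDyckFrom, ih, Nat.add_right_comm]; rfl

lemma isDyckFrom_replicate_D_append {k d : ℕ} {w : List DyckStep} :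
    IsDyckFrom k (replicate d D ++ w) ↔ d ≤ k ∧ IsDyckFrom (k - d) w := by
  induction d generalizing k with
  | zero => simp
  | succ d ih =>
    simp only [replicate_succ, cons_append, IsDyckFrom, ih, Nat.sub_sub, Nat.add_comm 1 d]
    exact ⟨fun ⟨_, _, hw⟩ => ⟨by omega, hw⟩,
      fun ⟨_, hw⟩ => ⟨by omega, by omega, hw⟩⟩

lemma forall_take_cons {α : Type*} (Q : List α → Prop) (s : α) (w : List α) :
    (∀ i, Q ((s :: w).take i)) ↔ Q [] ∧ ∀ i, Q (s :: w.take i) :=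
  ⟨fun h => ⟨h 0, fun i => h (i + 1)⟩, fun h i => by cases i <;> simp [h.1, h.2]⟩

lemma isDyckFrom_iff {k : ℕ} {w : List DyckStep} : IsDyckFrom k w ↔
    w.count U + k = w.count D ∧ ∀ i, (w.take i).count D ≤ (w.take i).count U + k := by
  induction w generalizing k with
  | nil => simp [IsDyckFrom]
  | cons s w ih =>
    rw [forall_take_cons (fun v => v.count D ≤ v.count U + k)]
    cases s <;> simp only [IsDyckFrom, ih, count_cons_self, ne_eq, reduceCtorEq,
      not_false_eq_true, count_cons_of_ne, count_nil, zero_add, zero_le, true_and]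
    · exact and_congr (by omega) (forall_congr' fun i => by omega)
    · constructor
      · rintro ⟨hk, hc, hp⟩
        exact ⟨by omega, fun i => by have := hp i; omega⟩
      · rintro ⟨hc, hp⟩
        have hk := hp 0
        simp only [take_zero, count_nil] at hk
        exact ⟨by omega, by omega, fun i => by have := hp i; omega⟩

lemma ncard_isDyckFrom_zero (n : ℕ) :
    {w | IsDyckFrom 0 w ∧ w.count U = n}.ncard = catalan n := by
  have : {w | IsDyckFrom 0 w ∧ w.count U = n} = DyckWord.toList '' {p | p.semilength = n} := by
    ext w
    simp only [isDyckFrom_iff, add_zero, Set.mem_ofPred_eq, Set.mem_image]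
    constructor
    · rintro ⟨⟨hc, hp⟩, rfl⟩
      exact ⟨⟨w, hc, hp⟩, rfl, rfl⟩
    · rintro ⟨p, rfl, rfl⟩
      exact ⟨⟨p.count_U_eq_count_D, p.count_D_le_count_U⟩, rfl⟩
  rw [this, Set.ncard_image_of_injective _ fun p q => DyckWord.ext]
  show Nat.card {p : DyckWord // p.semilength = n} = _
  rw [Nat.card_eq_fintype_card, DyckWord.card_dyckWord_semilength_eq_catalan]

structure IsPPRows (P : Finset (ℕ × ℕ)) (h : ℕ) (l r : ℕ → ℕ) : Prop where
  fst_le : ∀ p ∈ P, p.1 ≤ h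
  mem_iff : ∀ x ≤ h, ∀ y : ℕ, (x, y) ∈ P ↔ l x ≤ y ∧ y ≤ r x
  left_le_right : ∀ x ≤ h, l x ≤ r x
  left_zero : l 0 = 0
  step : ∀ x < h, l x ≤ l (x + 1) ∧ r x ≤ r (x + 1) ∧ l (x + 1) ≤ r x

lemma isPP_iff {P : Finset (ℕ × ℕ)} : IsPP P ↔ ∃ h l r, IsPPRows P h l r :=
  ⟨fun ⟨h, l, r, h₁, h₂, h₃, h₄, h₅⟩ => ⟨h, l, r, h₁, h₂, h₃, h₄, h₅⟩,
    fun ⟨h, l, r, H⟩ => ⟨h, l, r, H.1, H.2, H.3, H.4, H.5⟩⟩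

namespace IsPPRows

variable {P : Finset (ℕ × ℕ)} {h : ℕ} {l r : ℕ → ℕ}

lemma left_mem (H : IsPPRows P h l r) {x : ℕ} (hx : x ≤ h) : (x, l x) ∈ P :=
  (H.mem_iff x hx _).2 ⟨le_rfl, H.left_le_right x hx⟩

lemma right_mem (H : IsPPRows P h l r) {x : ℕ} (hx : x ≤ h) : (x, r x) ∈ P :=
  (H.mem_iff x hx _).2 ⟨H.left_le_right x hx, le_rfl⟩

lemma right_mono (H : IsPPRows P h l r) {x x' : ℕ} (hxx' : x ≤ x') (hx' : x' ≤ h) :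
    r x ≤ r x' := by
  induction x', hxx' using Nat.le_induction with
  | base => rfl
  | succ x' hxx' ih => exact (ih (by omega)).trans (H.step x' (by omega)).2.1

lemma exists_mem_of_le_right (H : IsPPRows P h l r) :
    ∀ x ≤ h, ∀ y ≤ r x, ∃ x', (x', y) ∈ P := by
  intro x
  induction x with
  | zero => exact fun hx y hy => ⟨0, (H.mem_iff 0 hx y).2 ⟨by simp [H.left_zero], hy⟩⟩
  | succ x ih =>
    intro hx y hy
    by_cases hly : l (x + 1) ≤ y
    · exact ⟨x + 1, (H.mem_iff _ hx y).2 ⟨hly, hy⟩⟩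
    · exact ih (by omega) y (by have := (H.step x (by omega)).2.2; omega)

lemma image_fst (H : IsPPRows P h l r) : P.image Prod.fst = Finset.range (h + 1) := by
  ext x
  simp only [Finset.mem_image, Finset.mem_range]
  refine ⟨?_, fun hx => ⟨_, H.left_mem (by omega), rfl⟩⟩
  rintro ⟨p, hp, rfl⟩
  exact Nat.lt_succ_of_le (H.fst_le p hp)

lemma image_snd (H : IsPPRows P h l r) : P.image Prod.snd = Finset.range (r h + 1) := by
  ext y
  simp only [Finset.mem_image, Finset.mem_range, Nat.lt_succ_iff]
  constructor
  · rintro ⟨⟨x, y⟩, hp, rfl⟩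
    have hx := H.fst_le _ hp
    exact ((H.mem_iff x hx y).1 hp).2.trans (H.right_mono hx le_rfl)
  · intro hy
    obtain ⟨x, hx⟩ := H.exists_mem_of_le_right h le_rfl y hy
    exact ⟨_, hx, rfl⟩

lemma ppSize_eq (H : IsPPRows P h l r) : ppSize P = h + r h + 1 := by
  simp only [ppSize, H.image_fst, H.image_snd, Finset.card_range]
  omega

lemma unique {h' : ℕ} {l' r' : ℕ → ℕ} (H : IsPPRows P h l r) (H' : IsPPRows P h' l' r') :
    h = h' ∧ ∀ x ≤ h, l x = l' x ∧ r x = r' x := by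
  have hh : h = h' :=
    le_antisymm (H'.fst_le _ (H.left_mem le_rfl)) (H.fst_le _ (H'.left_mem le_rfl))
  subst hh
  refine ⟨rfl, fun x hx => ?_⟩
  have h₁ := (H'.mem_iff x hx _).1 (H.left_mem hx)
  have h₂ := (H'.mem_iff x hx _).1 (H.right_mem hx)
  have h₃ := (H.mem_iff x hx _).1 (H'.left_mem hx)
  have h₄ := (H.mem_iff x hx _).1 (H'.right_mem hx)
  omega

end IsPPRows

/-- A row `{l, …, r}` is stored as the pair `(l, r)`. -/
def NextRow (a b : ℕ × ℕ) : Prop := a.1 ≤ b.1 ∧ a.2 ≤ b.2 ∧ b.1 ≤ a.2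

def IsRowList (L : List (ℕ × ℕ)) : Prop := L.head?.map Prod.fst = some 0 ∧ IsChain NextRow L

lemma IsRowList.ne_nil {L : List (ℕ × ℕ)} (hL : IsRowList L) : L ≠ [] := by
  rintro rfl
  simp [IsRowList] at hL

lemma IsRowList.exists_cons {L : List (ℕ × ℕ)} (hL : IsRowList L) :
    ∃ r₀ t, L = (0, r₀) :: t ∧ IsChain NextRow ((0, r₀) :: t) := by
  obtain ⟨⟨l₀, r₀⟩, t, rfl⟩ := exists_cons_of_ne_nil hL.ne_nil
  obtain rfl : l₀ = 0 := by simpa [IsRowList] using hL.1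
  exact ⟨r₀, t, rfl, hL.2⟩

def rowsSize : List (ℕ × ℕ) → ℕ
  | [] => 0
  | a :: t => t.length + 1 + (t.getLastD a).2

def ofRows (L : List (ℕ × ℕ)) : Finset (ℕ × ℕ) :=
  (Finset.range L.length).biUnion fun x =>
    {x} ×ˢ Finset.Icc (L.getD x (0, 0)).1 (L.getD x (0, 0)).2

lemma mem_ofRows {L : List (ℕ × ℕ)} {x y : ℕ} :
    (x, y) ∈ ofRows L ↔
      x < L.length ∧ (L.getD x (0, 0)).1 ≤ y ∧ y ≤ (L.getD x (0, 0)).2 := by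
  simp [ofRows]

lemma IsRowList.fst_le_snd {L : List (ℕ × ℕ)} (hL : IsRowList L) :
    ∀ p ∈ L, p.1 ≤ p.2 := by
  obtain ⟨r₀, t, rfl, ht⟩ := hL.exists_cons
  exact ht.induction (fun p => p.1 ≤ p.2) _ (fun _ _ hbc _ => hbc.2.2.trans hbc.2.1)
    (fun _ => Nat.zero_le r₀)

lemma isPPRows_ofRows {L : List (ℕ × ℕ)} (hL : IsRowList L) :
    IsPPRows (ofRows L) (L.length - 1) (fun x => (L.getD x (0, 0)).1)
      (fun x => (L.getD x (0, 0)).2) := by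
  have hlen := length_pos_of_ne_nil hL.ne_nil
  have hget {x : ℕ} (hx : x ≤ L.length - 1) : L.getD x (0, 0) = L[x]'(by omega) :=
    getD_eq_getElem _ _ _
  refine ⟨fun p hp => ?_, fun x hx y => ?_, fun x hx => ?_, ?_, fun x hx => ?_⟩
  · have := (mem_ofRows.1 hp).1
    omega
  · exact mem_ofRows.trans (and_iff_right (by omega))
  · rw [hget hx]
    exact hL.fst_le_snd _ (getElem_mem _)
  · obtain ⟨r₀, t, rfl, -⟩ := hL.exists_cons
    rfl
  · rw [hget hx.le, hget (by omega : x + 1 ≤ L.length - 1)]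
    exact isChain_iff_getElem.1 hL.2 x (by omega)

lemma ofRows_injOn : Set.InjOn ofRows {L | IsRowList L} := by
  intro L hL L' hL' h
  obtain ⟨hlen, hrows⟩ := (isPPRows_ofRows hL).unique (h ▸ isPPRows_ofRows hL')
  have := length_pos_of_ne_nil hL.ne_nil
  have := length_pos_of_ne_nil (IsRowList.ne_nil hL')
  refine ext_getElem (by omega) fun x hx hx' => ?_
  rw [← getD_eq_getElem _ (0, 0), ← getD_eq_getElem _ (0, 0)]
  exact Prod.ext (hrows x (by omega)).1 (hrows x (by omega)).2

lemma IsPPRows.exists_ofRows_eq {P : Finset (ℕ × ℕ)} {h : ℕ} {l r : ℕ → ℕ}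
    (H : IsPPRows P h l r) : ∃ L, IsRowList L ∧ ofRows L = P := by
  refine ⟨(List.range (h + 1)).map fun x => (l x, r x),
    ⟨by simp [head?_range, H.left_zero], ?_⟩, ?_⟩
  · rw [isChain_map, isChain_range_succ]
    exact H.step
  · ext ⟨x, y⟩
    rw [mem_ofRows]
    by_cases hx : x ≤ h
    · simp [getD_eq_getElem?_getD, hx, H.mem_iff x hx y]
    · exact iff_of_false (by simp; omega) fun hp => hx (H.fst_le _ hp)

lemma ppSize_ofRows {L : List (ℕ × ℕ)} (hL : IsRowList L) :
    ppSize (ofRows L) = rowsSize L := by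
  rw [(isPPRows_ofRows hL).ppSize_eq]
  obtain ⟨r₀, t, rfl, -⟩ := hL.exists_cons
  rw [rowsSize, ← getLast_eq_getLastD (cons_ne_nil _ _), getLast_eq_getElem,
    getD_eq_getElem _ _ (by simp)]
  simp only [length_cons, Nat.add_sub_cancel]
  omega

lemma image_ofRows (n : ℕ) :
    ofRows '' {L | IsRowList L ∧ rowsSize L = n} = {P | IsPP P ∧ ppSize P = n} := by
  ext P
  constructor
  · rintro ⟨L, ⟨hL, rfl⟩, rfl⟩
    exact ⟨isPP_iff.2 ⟨_, _, _, isPPRows_ofRows hL⟩, ppSize_ofRows hL⟩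
  · rintro ⟨hP, rfl⟩
    obtain ⟨h, l, r, H⟩ := isPP_iff.1 hP
    obtain ⟨L, hL, rfl⟩ := H.exists_ofRows_eq
    exact ⟨L, ⟨hL, (ppSize_ofRows hL).symm⟩, rfl⟩

def encodeFrom (a : ℕ × ℕ) : List (ℕ × ℕ) → List DyckStep
  | [] => replicate (a.2 - a.1 + 1) D
  | b :: t => replicate (b.1 - a.1 + 1) D ++ replicate (b.2 - a.2 + 1) U ++ encodeFrom b t

lemma head?_encodeFrom (a : ℕ × ℕ) (t : List (ℕ × ℕ)) :
    (encodeFrom a t).head? = some D := by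
  cases t <;> simp [encodeFrom, replicate_succ]

lemma isDyckFrom_encodeFrom {a : ℕ × ℕ} {t : List (ℕ × ℕ)}
    (ht : IsChain NextRow (a :: t)) :
    IsDyckFrom (a.2 - a.1 + 1) (encodeFrom a t) := by
  induction t generalizing a with
  | nil =>
    simpa [encodeFrom] using
      (isDyckFrom_replicate_D_append (d := a.2 - a.1 + 1) (w := [])).2 ⟨le_rfl, Nat.sub_self _⟩
  | cons b t ih =>
    obtain ⟨⟨h1, h2, h3⟩, ht⟩ := isChain_cons_cons.mp ht
    rw [encodeFrom, append_assoc, isDyckFrom_replicate_D_append, isDyckFrom_replicate_U_append]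
    exact ⟨by omega, by convert ih ht using 1; omega⟩

lemma count_U_encodeFrom {a : ℕ × ℕ} {t : List (ℕ × ℕ)} (ht : IsChain NextRow (a :: t)) :
    (encodeFrom a t).count U + a.2 = t.length + (t.getLastD a).2 := by
  induction t generalizing a with
  | nil => simp [encodeFrom, count_replicate]
  | cons b t ih =>
    obtain ⟨⟨-, h2, -⟩, ht⟩ := isChain_cons_cons.mp ht
    have := ih ht
    simp only [encodeFrom, count_append, count_replicate_self, count_replicate, getLastD_cons,
      length_cons, reduceCtorEq, beq_iff_eq, if_false]
    omega

lemma encodeFrom_inj {a : ℕ × ℕ} {t t' : List (ℕ × ℕ)} (ht : IsChain NextRow (a :: t))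
    (ht' : IsChain NextRow (a :: t')) (h : encodeFrom a t = encodeFrom a t') : t = t' := by
  induction t generalizing a t' with
  | nil =>
    cases t' with
    | nil => rfl
    | cons b' t' => simpa [encodeFrom, replicate_succ] using congrArg (U ∈ ·) h
  | cons b t ih =>
    cases t' with
    | nil => simpa [encodeFrom, replicate_succ] using congrArg (U ∈ ·) h
    | cons b' t' =>
      obtain ⟨⟨hb1, hb2, -⟩, ht⟩ := isChain_cons_cons.mp ht
      obtain ⟨⟨hb1', hb2', -⟩, ht'⟩ := isChain_cons_cons.mp ht'
      simp only [encodeFrom, append_assoc] at h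
      obtain ⟨hd, h⟩ :=
        replicate_append_inj (by simp [replicate_succ]) (by simp [replicate_succ]) h
      obtain ⟨hu, h⟩ := replicate_append_inj (by simp [head?_encodeFrom])
        (by simp [head?_encodeFrom]) h
      have hb : b = b' := Prod.ext (by omega) (by omega)
      subst hb
      rw [ih ht ht' h]

lemma exists_encodeFrom_eq {a : ℕ × ℕ} (ha : a.1 ≤ a.2) {w : List DyckStep}
    (hw : IsDyckFrom (a.2 - a.1 + 1) w) (hD : w.head? ≠ some U) :
    ∃ t, IsChain NextRow (a :: t) ∧ encodeFrom a t = w := by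
  induction hlen : w.length using Nat.strong_induction_on generalizing a w with
  | _ len ih =>
  subst hlen
  obtain ⟨d, rest, rfl, hrest⟩ := exists_eq_replicate_append D w
  rw [isDyckFrom_replicate_D_append] at hw
  match rest, hrest, hw with
  | [], _, ⟨hdk, hw⟩ =>
    obtain rfl : d = a.2 - a.1 + 1 := by have : a.2 - a.1 + 1 - d = 0 := hw; omega
    exact ⟨[], isChain_singleton a, (append_nil _).symm⟩
  | D :: _, hrest, _ => simp at hrest
  | U :: s, _, ⟨hdk, hw⟩ =>
    obtain ⟨u, w', rfl, hw'⟩ := exists_eq_replicate_append U s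
    have hd : d ≠ 0 := by rintro rfl; simp at hD
    rw [IsDyckFrom, isDyckFrom_replicate_U_append] at hw
    obtain ⟨t, ht, rfl⟩ := ih w'.length (by simp; omega) (a := (a.1 + d - 1, a.2 + u))
      (by dsimp only; omega) (by convert hw using 1; dsimp only; omega) hw' rfl
    have hab : NextRow a (a.1 + d - 1, a.2 + u) := by simp only [NextRow]; omega
    refine ⟨_ :: t, isChain_cons_cons.mpr ⟨hab, ht⟩, ?_⟩
    rw [encodeFrom, append_assoc, show a.1 + d - 1 - a.1 + 1 = d by omega,
      Nat.add_sub_cancel_left, replicate_succ, cons_append]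

def encode : List (ℕ × ℕ) → List DyckStep
  | [] => []
  | a :: t => replicate (a.2 + 1) U ++ encodeFrom a t

lemma isDyckFrom_encode {L : List (ℕ × ℕ)} (hL : IsRowList L) : IsDyckFrom 0 (encode L) := by
  obtain ⟨r₀, t, rfl, ht⟩ := hL.exists_cons
  rw [encode, isDyckFrom_replicate_U_append]
  simpa using isDyckFrom_encodeFrom ht

lemma count_U_encode {L : List (ℕ × ℕ)} (hL : IsRowList L) :
    (encode L).count U = rowsSize L := by
  obtain ⟨r₀, t, rfl, ht⟩ := hL.exists_cons
  have := count_U_encodeFrom ht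
  simp only [encode, rowsSize, count_append, count_replicate_self]
  omega

lemma encode_injOn : Set.InjOn encode {L | IsRowList L} := by
  intro L hL L' hL' h
  obtain ⟨r₀, t, rfl, ht⟩ := hL.exists_cons
  obtain ⟨r₀', t', rfl, ht'⟩ := IsRowList.exists_cons hL'
  obtain ⟨hr, h⟩ :=
    replicate_append_inj (by simp [head?_encodeFrom]) (by simp [head?_encodeFrom]) h
  obtain rfl : r₀ = r₀' := by omega
  rw [encodeFrom_inj ht ht' h]

lemma exists_encode_eq {w : List DyckStep} (hw : IsDyckFrom 0 w) (hne : w ≠ []) :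
    ∃ L, IsRowList L ∧ encode L = w := by
  obtain ⟨k, s, rfl, hs⟩ := exists_eq_replicate_append U w
  rw [isDyckFrom_replicate_U_append, zero_add] at hw
  obtain ⟨r₀, rfl⟩ : ∃ r₀, k = r₀ + 1 := by
    refine Nat.exists_eq_succ_of_ne_zero fun hk => ?_
    subst hk
    match s, hs, hw with
    | [], _, _ => exact hne rfl
    | D :: _, _, hw => exact lt_irrefl 0 hw.1
    | U :: _, hs, _ => exact hs rfl
  obtain ⟨t, ht, rfl⟩ :=
    exists_encodeFrom_eq (a := (0, r₀)) (Nat.zero_le _) (by simpa using hw) hs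
  exact ⟨(0, r₀) :: t, ⟨rfl, ht⟩, rfl⟩

lemma image_encode {n : ℕ} (hn : n ≠ 0) :
    encode '' {L | IsRowList L ∧ rowsSize L = n} = {w | IsDyckFrom 0 w ∧ w.count U = n} := by
  ext w
  constructor
  · rintro ⟨L, ⟨hL, rfl⟩, rfl⟩
    exact ⟨isDyckFrom_encode hL, count_U_encode hL⟩
  · rintro ⟨hw, rfl⟩
    obtain ⟨L, hL, rfl⟩ := exists_encode_eq hw (by rintro rfl; simp at hn)
    exact ⟨L, ⟨hL, (count_U_encode hL).symm⟩, rfl⟩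

end ParallelogramPolyomino

theorem pp_count_eq_catalan (n : ℕ) (hn : 1 ≤ n) :
    Set.ncard {P : Finset (ℕ × ℕ) | IsPP P ∧ ppSize P = n} = catalan n := by
  open ParallelogramPolyomino DyckStep in
  calc {P : Finset (ℕ × ℕ) | IsPP P ∧ ppSize P = n}.ncard
      = {L | IsRowList L ∧ rowsSize L = n}.ncard := by
        rw [← image_ofRows, (ofRows_injOn.mono fun _ hL => hL.1).ncard_image]
    _ = {w | IsDyckFrom 0 w ∧ w.count U = n}.ncard := by
        rw [← image_encode (by omega), (encode_injOn.mono fun _ hL => hL.1).ncard_image]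
    _ = catalan n := ncard_isDyckFrom_zero n
end

section
/- Let A be a non-ambiguous tree such that for all u, v ∈ V_L, u.1 < v.1 implies u.2 ≤ v.2, and for all u, v ∈ V_R, u.2 < v.2 implies u.1 ≤ v.1. Then the filling F(A) = {(x,y) ∈ ℕ × ℕ : (∃ p ∈ A with p.1 = x and p.2 ≤ y) and (∃ q ∈ A with q.2 = y and q.1 ≤ x)} is a parallelogram polyomino. -/
/-- The set of left children of a non-ambiguous tree. -/
def VL (A : Finset (ℕ × ℕ)) : Set (ℕ × ℕ) :=
  {p | p ∈ A ∧ p ≠ (0, 0) ∧ ∃ r ∈ A, r.2 = p.2 ∧ r.1 < p.1}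

/-- The set of right children of a non-ambiguous tree. -/
def VR (A : Finset (ℕ × ℕ)) : Set (ℕ × ℕ) :=
  {p | p ∈ A ∧ p ≠ (0, 0) ∧ ∃ q ∈ A, q.1 = p.1 ∧ q.2 < p.2}

/-!
The filling of `A` is cut out by two staircases: a cell `(x, y)` lies in it iff it is above the
lowest point `colMin A x` of column `x` and to the right of the leftmost point `rowMin A y` of
row `y`. For `x > 0` the lowest point of column `x` has nothing below it, so it is a left child,
and the hypothesis on left children makes `colMin A` weakly increasing; symmetrically `rowMin A`
is weakly increasing. Being a left child, the lowest point of column `x + 1` has a point of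
`A` to its left, i.e. `rowMin A (colMin A (x + 1)) ≤ x`: this is exactly the overlap
`l (x + 1) ≤ r x` of consecutive columns, where `r x` is the last row whose leftmost point
is in a column `≤ x`.
-/

open Finset

theorem isPP_filter_staircase (h H : ℕ) (l m : ℕ → ℕ)
    (hl : MonotoneOn l (Set.Iic h)) (hm : MonotoneOn m (Set.Iic H)) (hl0 : l 0 = 0)
    (hm0 : m 0 = 0) (hlH : ∀ x ≤ h, l x ≤ H) (hml : ∀ x < h, m (l (x + 1)) ≤ x) :
    IsPP ((Iic h ×ˢ Iic H).filter fun p => l p.1 ≤ p.2 ∧ m p.2 ≤ p.1) := by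
  set r : ℕ → ℕ := fun x => Nat.findGreatest (fun y => m y ≤ x) H
  have r_le : ∀ x, r x ≤ H := fun x => Nat.findGreatest_le H
  have m_r_le : ∀ x, m (r x) ≤ x := fun x =>
    Nat.findGreatest_spec (P := fun y => m y ≤ x) (Nat.zero_le H) (by simp [hm0])
  have le_r : ∀ {x y}, y ≤ H → m y ≤ x → y ≤ r x := fun hy hmy => Nat.le_findGreatest hy hmy
  have m_l_le : ∀ x ≤ h, m (l x) ≤ x := by
    rintro (_ | x) hx
    · simp [hl0, hm0]
    · exact (hml x hx).trans x.le_succ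
  refine ⟨h, l, r, fun p hp => (mem_Iic.1 (mem_product.1 (mem_filter.1 hp).1).1), ?_,
    fun x hx => le_r (hlH x hx) (m_l_le x hx), hl0, fun x hx => ⟨?_, ?_, ?_⟩⟩
  · intro x hx y
    simp only [mem_filter, mem_product, mem_Iic]
    constructor
    · rintro ⟨⟨-, hy⟩, hly, hmy⟩
      exact ⟨hly, le_r hy hmy⟩
    · rintro ⟨hly, hyr⟩
      have hy : y ≤ H := hyr.trans (r_le x)
      exact ⟨⟨hx, hy⟩, hly, (hm hy (r_le x) hyr).trans (m_r_le x)⟩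
  · exact hl (show x ≤ h by omega) (show x + 1 ≤ h from hx) x.le_succ
  · exact le_r (r_le x) ((m_r_le x).trans x.le_succ)
  · exact le_r (hlH _ hx) (hml x hx)

-- As `sInf ∅ = 0`, both are `0` on an empty column or row.
noncomputable def colMin (A : Finset (ℕ × ℕ)) (x : ℕ) : ℕ := sInf {y | (x, y) ∈ A}

noncomputable def rowMin (A : Finset (ℕ × ℕ)) (y : ℕ) : ℕ := sInf {x | (x, y) ∈ A}

section

variable {A : Finset (ℕ × ℕ)}

theorem colMin_le {x y : ℕ} (hxy : (x, y) ∈ A) : colMin A x ≤ y := Nat.sInf_le hxy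

theorem rowMin_le {x y : ℕ} (hxy : (x, y) ∈ A) : rowMin A y ≤ x := Nat.sInf_le hxy

theorem mk_colMin_mem {x : ℕ} (hx : ∃ y, (x, y) ∈ A) : (x, colMin A x) ∈ A := Nat.sInf_mem hx

theorem mk_rowMin_mem {y : ℕ} (hy : ∃ x, (x, y) ∈ A) : (rowMin A y, y) ∈ A := Nat.sInf_mem hy

theorem exists_mem_fst_eq_snd_le_iff {x y : ℕ} :
    (∃ p ∈ A, p.1 = x ∧ p.2 ≤ y) ↔ (∃ y', (x, y') ∈ A) ∧ colMin A x ≤ y := by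
  constructor
  · rintro ⟨⟨_, y'⟩, hp, rfl, hy'⟩
    exact ⟨⟨y', hp⟩, (colMin_le hp).trans hy'⟩
  · rintro ⟨hx, hy⟩
    exact ⟨_, mk_colMin_mem hx, rfl, hy⟩

theorem exists_mem_snd_eq_fst_le_iff {x y : ℕ} :
    (∃ q ∈ A, q.2 = y ∧ q.1 ≤ x) ↔ (∃ x', (x', y) ∈ A) ∧ rowMin A y ≤ x := by
  constructor
  · rintro ⟨⟨x', _⟩, hq, rfl, hx'⟩
    exact ⟨⟨x', hq⟩, (rowMin_le hq).trans hx'⟩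
  · rintro ⟨hy, hx⟩
    exact ⟨_, mk_rowMin_mem hy, rfl, hx⟩

end

namespace IsNAT

variable {A : Finset (ℕ × ℕ)}

theorem exists_mem_fst_iff (hA : IsNAT A) {x : ℕ} :
    (∃ y, (x, y) ∈ A) ↔ x ≤ A.sup Prod.fst := by
  refine ⟨fun ⟨y, hy⟩ => le_sup (f := Prod.fst) hy, fun hx => ?_⟩
  obtain ⟨p, hp, hsup⟩ := exists_mem_eq_sup A ⟨_, hA.1⟩ Prod.fst
  rcases hx.lt_or_eq with hlt | rfl
  · obtain ⟨q, hq, rfl⟩ := (hA.2.2 p hp).1 x (hsup ▸ hlt)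
    exact ⟨q.2, hq⟩
  · exact ⟨p.2, hsup ▸ hp⟩

theorem exists_mem_snd_iff (hA : IsNAT A) {y : ℕ} :
    (∃ x, (x, y) ∈ A) ↔ y ≤ A.sup Prod.snd := by
  refine ⟨fun ⟨x, hx⟩ => le_sup (f := Prod.snd) hx, fun hy => ?_⟩
  obtain ⟨p, hp, hsup⟩ := exists_mem_eq_sup A ⟨_, hA.1⟩ Prod.snd
  rcases hy.lt_or_eq with hlt | rfl
  · obtain ⟨q, hq, rfl⟩ := (hA.2.2 p hp).2 y (hsup ▸ hlt)
    exact ⟨q.1, hq⟩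
  · exact ⟨p.1, hsup ▸ hp⟩

theorem colMin_zero (hA : IsNAT A) : colMin A 0 = 0 := Nat.le_zero.1 (colMin_le hA.1)

theorem rowMin_zero (hA : IsNAT A) : rowMin A 0 = 0 := Nat.le_zero.1 (rowMin_le hA.1)

theorem mk_colMin_mem_VL (hA : IsNAT A) {x : ℕ} (hx0 : 0 < x) (hx : ∃ y, (x, y) ∈ A) :
    (x, colMin A x) ∈ VL A := by
  have hne : (x, colMin A x) ≠ (0, 0) := fun h => hx0.ne' (congrArg Prod.fst h)
  refine ⟨mk_colMin_mem hx, hne, ?_⟩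
  rcases hA.2.1 _ (mk_colMin_mem hx) hne with ⟨⟨⟨_, y⟩, hq, rfl, hlt⟩, -⟩ | ⟨hleft, -⟩
  · exact absurd (colMin_le hq) hlt.not_ge
  · exact hleft

theorem mk_rowMin_mem_VR (hA : IsNAT A) {y : ℕ} (hy0 : 0 < y) (hy : ∃ x, (x, y) ∈ A) :
    (rowMin A y, y) ∈ VR A := by
  have hne : (rowMin A y, y) ≠ (0, 0) := fun h => hy0.ne' (congrArg Prod.snd h)
  refine ⟨mk_rowMin_mem hy, hne, ?_⟩
  rcases hA.2.1 _ (mk_rowMin_mem hy) hne with ⟨hright, -⟩ | ⟨⟨⟨x, _⟩, hr, rfl, hlt⟩, -⟩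
  · exact hright
  · exact absurd (rowMin_le hr) hlt.not_ge

theorem monotoneOn_colMin (hA : IsNAT A)
    (hL : ∀ u ∈ VL A, ∀ v ∈ VL A, u.1 < v.1 → u.2 ≤ v.2) :
    MonotoneOn (colMin A) (Set.Iic (A.sup Prod.fst)) := by
  intro x₁ hx₁ x₂ hx₂ h₁₂
  rcases h₁₂.lt_or_eq with hlt | rfl
  · rcases Nat.eq_zero_or_pos x₁ with rfl | hpos
    · simp [hA.colMin_zero]
    · exact hL _ (hA.mk_colMin_mem_VL hpos (hA.exists_mem_fst_iff.2 hx₁)) _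
        (hA.mk_colMin_mem_VL (hpos.trans hlt) (hA.exists_mem_fst_iff.2 hx₂)) hlt
  · rfl

theorem monotoneOn_rowMin (hA : IsNAT A)
    (hR : ∀ u ∈ VR A, ∀ v ∈ VR A, u.2 < v.2 → u.1 ≤ v.1) :
    MonotoneOn (rowMin A) (Set.Iic (A.sup Prod.snd)) := by
  intro y₁ hy₁ y₂ hy₂ h₁₂
  rcases h₁₂.lt_or_eq with hlt | rfl
  · rcases Nat.eq_zero_or_pos y₁ with rfl | hpos
    · simp [hA.rowMin_zero]
    · exact hR _ (hA.mk_rowMin_mem_VR hpos (hA.exists_mem_snd_iff.2 hy₁)) _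
        (hA.mk_rowMin_mem_VR (hpos.trans hlt) (hA.exists_mem_snd_iff.2 hy₂)) hlt
  · rfl

theorem rowMin_colMin_succ_le (hA : IsNAT A) {x : ℕ} (hx : x < A.sup Prod.fst) :
    rowMin A (colMin A (x + 1)) ≤ x := by
  obtain ⟨-, -, ⟨x', _⟩, hr, rfl, hlt⟩ :=
    hA.mk_colMin_mem_VL x.succ_pos (hA.exists_mem_fst_iff.2 hx)
  exact Nat.le_of_lt_succ ((rowMin_le hr).trans_lt hlt)

theorem colMin_le_sup_snd (hA : IsNAT A) {x : ℕ} (hx : x ≤ A.sup Prod.fst) :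
    colMin A x ≤ A.sup Prod.snd :=
  hA.exists_mem_snd_iff.1 ⟨x, mk_colMin_mem (hA.exists_mem_fst_iff.2 hx)⟩

end IsNAT

theorem filling_is_pp (A : Finset (ℕ × ℕ)) (hA : IsNAT A)
    (hL : ∀ u ∈ VL A, ∀ v ∈ VL A, u.1 < v.1 → u.2 ≤ v.2)
    (hR : ∀ u ∈ VR A, ∀ v ∈ VR A, u.2 < v.2 → u.1 ≤ v.1) :
    ∃ Q : Finset (ℕ × ℕ),
      (∀ x y : ℕ, (x, y) ∈ Q ↔
        (∃ p ∈ A, p.1 = x ∧ p.2 ≤ y) ∧ (∃ q ∈ A, q.2 = y ∧ q.1 ≤ x)) ∧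
      IsPP Q := by
  refine ⟨(Iic (A.sup Prod.fst) ×ˢ Iic (A.sup Prod.snd)).filter
    fun p => colMin A p.1 ≤ p.2 ∧ rowMin A p.2 ≤ p.1, fun x y => ?_,
    isPP_filter_staircase _ _ _ _ (hA.monotoneOn_colMin hL) (hA.monotoneOn_rowMin hR)
      hA.colMin_zero hA.rowMin_zero (fun _ => hA.colMin_le_sup_snd)
      (fun _ => hA.rowMin_colMin_succ_le)⟩
  rw [exists_mem_fst_eq_snd_le_iff, exists_mem_snd_eq_fst_le_iff, hA.exists_mem_fst_iff,
    hA.exists_mem_snd_iff]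
  simp only [mem_filter, mem_product, mem_Iic]
  tauto
end

section
/- The de-filling map Ŝ and the filling map F̂ are mutually inverse: for every finite nonempty U ⊆ ℕ × ℕ avoiding the empty-corner pattern, the set Ŝ(U) avoids the filled-corner pattern and F̂(Ŝ(U)) = U; and for every finite nonempty W ⊆ ℕ × ℕ avoiding the filled-corner pattern, the set F̂(W) avoids the empty-corner pattern and Ŝ(F̂(W)) = W. -/
/-- The de-filling map `Ŝ`: keep only the cells that are not strictly below another
cell of the same column and strictly to the right of another cell of the same row. -/
def Shat (U : Finset (ℕ × ℕ)) : Finset (ℕ × ℕ) :=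
  U.filter (fun c => ¬ ((∃ y' < c.2, (c.1, y') ∈ U) ∧ (∃ x' < c.1, (x', c.2) ∈ U)))

/-- The filling map `F̂`:
`F̂(U) = {(x,y) : (∃ p ∈ U, p.1 = x ∧ p.2 ≤ y) ∧ (∃ q ∈ U, q.2 = y ∧ q.1 ≤ x)}`. -/
def Fhat (U : Finset (ℕ × ℕ)) : Finset (ℕ × ℕ) :=
  ((U.image Prod.fst) ×ˢ (U.image Prod.snd)).filter
    (fun c => (∃ p ∈ U, p.1 = c.1 ∧ p.2 ≤ c.2) ∧ (∃ q ∈ U, q.2 = c.2 ∧ q.1 ≤ c.1))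

/-- `U` avoids the empty-corner pattern. -/
def AvoidsEmptyCorner (U : Finset (ℕ × ℕ)) : Prop :=
  ∀ x₁ y₁ x₂ y₂ : ℕ, (x₁, y₁) ∈ U → (x₂, y₂) ∈ U → x₂ < x₁ → y₁ < y₂ → (x₁, y₂) ∈ U

/-- `U` avoids the filled-corner pattern. -/
def AvoidsFilledCorner (U : Finset (ℕ × ℕ)) : Prop :=
  ∀ x₁ y₁ x₂ y₂ : ℕ, (x₁, y₁) ∈ U → (x₂, y₂) ∈ U → x₂ < x₁ → y₁ < y₂ → (x₁, y₂) ∉ U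

/-!
A cell of `U` lies in `Ŝ(U)` exactly when it is the lowest cell of its column or the leftmost
cell of its row, and `F̂(W)` adds every cell lying above a cell of `W` in its column and to the
right of a cell of `W` in its row. Hence `Ŝ(U)` keeps the bottom of every column and the left
end of every row of `U`, which is all `F̂` needs to rebuild `U` when `U` has no empty corner;
conversely, a cell added by `F̂(W)` sees a cell of `W` both below and to its left, so `Ŝ` removes
it again, while a cell of `W` survives because `W` has no filled corner.
-/

variable {U W : Finset (ℕ × ℕ)} {x y : ℕ}

lemma mem_Shat :
    (x, y) ∈ Shat U ↔
      (x, y) ∈ U ∧ ¬((∃ y' < y, (x, y') ∈ U) ∧ (∃ x' < x, (x', y) ∈ U)) := by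
  simp [Shat]

lemma mem_Fhat :
    (x, y) ∈ Fhat U ↔ (∃ y' ≤ y, (x, y') ∈ U) ∧ (∃ x' ≤ x, (x', y) ∈ U) := by
  constructor
  · intro hc
    obtain ⟨-, ⟨⟨px, py⟩, hp, rfl, hpy⟩, ⟨⟨qx, qy⟩, hq, rfl, hqx⟩⟩ := Finset.mem_filter.mp hc
    exact ⟨⟨py, hpy, hp⟩, ⟨qx, hqx, hq⟩⟩
  · rintro ⟨⟨y', hy', hp⟩, ⟨x', hx', hq⟩⟩
    refine Finset.mem_filter.mpr ⟨Finset.mem_product.mpr ⟨?_, ?_⟩,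
      ⟨_, hp, rfl, hy'⟩, ⟨_, hq, rfl, hx'⟩⟩
    · exact Finset.mem_image.mpr ⟨_, hp, rfl⟩
    · exact Finset.mem_image.mpr ⟨_, hq, rfl⟩

lemma Shat_subset (U : Finset (ℕ × ℕ)) : Shat U ⊆ U := Finset.filter_subset _ _

lemma subset_Fhat (W : Finset (ℕ × ℕ)) : W ⊆ Fhat W := fun _ hc =>
  mem_Fhat.mpr ⟨⟨_, le_rfl, hc⟩, ⟨_, le_rfl, hc⟩⟩

lemma exists_le_mem_Shat_of_mem_column (h : (x, y) ∈ U) : ∃ y₀ ≤ y, (x, y₀) ∈ Shat U := by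
  classical
  have hcol : ∃ y₀, (x, y₀) ∈ U := ⟨y, h⟩
  exact ⟨Nat.find hcol, Nat.find_min' hcol h, mem_Shat.mpr
    ⟨Nat.find_spec hcol, fun ⟨⟨_, hy', hy'U⟩, _⟩ => Nat.find_min hcol hy' hy'U⟩⟩

lemma exists_le_mem_Shat_of_mem_row (h : (x, y) ∈ U) : ∃ x₀ ≤ x, (x₀, y) ∈ Shat U := by
  classical
  have hrow : ∃ x₀, (x₀, y) ∈ U := ⟨x, h⟩
  exact ⟨Nat.find hrow, Nat.find_min' hrow h, mem_Shat.mpr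
    ⟨Nat.find_spec hrow, fun ⟨_, ⟨_, hx', hx'U⟩⟩ => Nat.find_min hrow hx' hx'U⟩⟩

lemma avoidsFilledCorner_Shat (U : Finset (ℕ × ℕ)) : AvoidsFilledCorner (Shat U) :=
  fun _ y₁ x₂ _ h₁ h₂ hx hy hc =>
    (mem_Shat.mp hc).2 ⟨⟨y₁, hy, Shat_subset U h₁⟩, ⟨x₂, hx, Shat_subset U h₂⟩⟩

lemma avoidsEmptyCorner_Fhat (W : Finset (ℕ × ℕ)) : AvoidsEmptyCorner (Fhat W) := by
  intro x₁ y₁ x₂ y₂ h₁ h₂ hx hy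
  obtain ⟨⟨y', hy', hbelow⟩, -⟩ := mem_Fhat.mp h₁
  obtain ⟨-, ⟨x', hx', hleft⟩⟩ := mem_Fhat.mp h₂
  exact mem_Fhat.mpr ⟨⟨y', hy'.trans hy.le, hbelow⟩, ⟨x', hx'.trans hx.le, hleft⟩⟩

lemma Fhat_subset_of_avoidsEmptyCorner {V : Finset (ℕ × ℕ)} (hU : AvoidsEmptyCorner U)
    (hV : V ⊆ U) : Fhat V ⊆ U := by
  rintro ⟨x, y⟩ hc
  obtain ⟨⟨y', hy', hbelow⟩, ⟨x', hx', hleft⟩⟩ := mem_Fhat.mp hc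
  rcases hy'.eq_or_lt with rfl | hy'
  · exact hV hbelow
  rcases hx'.eq_or_lt with rfl | hx'
  · exact hV hleft
  exact hU x y' x' y (hV hbelow) (hV hleft) hx' hy'

lemma subset_Fhat_Shat (U : Finset (ℕ × ℕ)) : U ⊆ Fhat (Shat U) := by
  rintro ⟨x, y⟩ h
  exact mem_Fhat.mpr ⟨exists_le_mem_Shat_of_mem_column h, exists_le_mem_Shat_of_mem_row h⟩

lemma Shat_Fhat_subset (W : Finset (ℕ × ℕ)) : Shat (Fhat W) ⊆ W := by
  rintro ⟨x, y⟩ hc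
  obtain ⟨hF, hkept⟩ := mem_Shat.mp hc
  obtain ⟨⟨y', hy', hbelow⟩, ⟨x', hx', hleft⟩⟩ := mem_Fhat.mp hF
  rcases hy'.eq_or_lt with rfl | hy'
  · exact hbelow
  rcases hx'.eq_or_lt with rfl | hx'
  · exact hleft
  exact absurd ⟨⟨y', hy', subset_Fhat W hbelow⟩, ⟨x', hx', subset_Fhat W hleft⟩⟩ hkept

lemma subset_Shat_Fhat (hW : AvoidsFilledCorner W) : W ⊆ Shat (Fhat W) := by
  rintro ⟨x, y⟩ h
  refine mem_Shat.mpr ⟨subset_Fhat W h, ?_⟩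
  rintro ⟨⟨y', hy', hbelow⟩, ⟨x', hx', hleft⟩⟩
  obtain ⟨⟨y'', hy'', hbelow'⟩, -⟩ := mem_Fhat.mp hbelow
  obtain ⟨-, ⟨x'', hx'', hleft'⟩⟩ := mem_Fhat.mp hleft
  exact hW x y'' x'' y hbelow' hleft' (hx''.trans_lt hx') (hy''.trans_lt hy') h

theorem shat_fhat_inverse :
    (∀ U : Finset (ℕ × ℕ), U.Nonempty → AvoidsEmptyCorner U →
      AvoidsFilledCorner (Shat U) ∧ Fhat (Shat U) = U) ∧
    (∀ W : Finset (ℕ × ℕ), W.Nonempty → AvoidsFilledCorner W →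
      AvoidsEmptyCorner (Fhat W) ∧ Shat (Fhat W) = W) :=
  ⟨fun U _ hU => ⟨avoidsFilledCorner_Shat U,
      (Fhat_subset_of_avoidsEmptyCorner hU (Shat_subset U)).antisymm (subset_Fhat_Shat U)⟩,
    fun W _ hW => ⟨avoidsEmptyCorner_Fhat W,
      (Shat_Fhat_subset W).antisymm (subset_Shat_Fhat hW)⟩⟩
end
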